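/- arXiv:1212.0189 — 5 statements merged into one kernel-verified Lean document; each statement's English description precedes it below -/
import Mathlib

section
/- Define F_n : ℤ → ℝ recursively by F_0(x) = 1 for x ≤ 0, F_0(x) = 0 for x > 0, and F_{n+1}(x) = ((F_n(x) + F_n(x-1))/2)². Then for every fixed x ∈ ℤ, the sequence n ↦ F_n(x) is non-decreasing. -/
theorem Fn_monotone (F : ℕ → ℤ → ℝ)
    (h0 : ∀ x : ℤ, F 0 x = if x ≤ 0 then 1 else 0)
    (hrec : ∀ (n : ℕ) (x : ℤ), F (n + 1) x = ((F n x + F n (x - 1)) / 2) ^ 2) :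
    ∀ x : ℤ, Monotone fun n => F n x := by
  have hnn : ∀ n x, 0 ≤ F n x := by
    intro n
    cases n with
    | zero => intro x; rw [h0]; split <;> norm_num
    | succ n => intro x; rw [hrec]; positivity
  have hstep : ∀ n x, F n x ≤ F (n + 1) x := by
    intro n
    induction n with
    | zero =>
      intro x
      rw [hrec, h0, h0]
      by_cases hx : x ≤ 0
      · have hx1 : x - 1 ≤ 0 := by omega
        simp [hx, hx1]
      · simp [hx]; positivity
    | succ n ih =>
      intro x
      rw [hrec n x, hrec (n+1) x]
      have h1 := ih x
      have h2 := ih (x - 1)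
      have hn1 := hnn n x
      have hn2 := hnn n (x - 1)
      gcongr
  intro x
  exact monotone_nat_of_le_succ fun n => hstep n x
end

section
/- Define F_n : ℤ → ℝ recursively by F_0(x) = 1 for x ≤ 0, F_0(x) = 0 for x > 0, and F_{n+1}(x) = ((F_n(x) + F_n(x-1))/2)². Then for every fixed x ∈ ℤ, lim_{n→∞} F_n(x) = 1. -/
theorem Fn_tendsto_one (F : ℕ → ℤ → ℝ)
    (h0 : ∀ x : ℤ, F 0 x = if x ≤ 0 then 1 else 0)
    (hrec : ∀ (n : ℕ) (x : ℤ), F (n + 1) x = ((F n x + F n (x - 1)) / 2) ^ 2) :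
    ∀ x : ℤ, Filter.Tendsto (fun n => F n x) Filter.atTop (nhds 1) := by
  have hnn : ∀ n x, 0 ≤ F n x := by
    intro n
    induction n with
    | zero => intro x; rw [h0]; split <;> norm_num
    | succ n ih => intro x; rw [hrec]; positivity
  have hle1 : ∀ n x, F n x ≤ 1 := by
    intro n
    induction n with
    | zero => intro x; rw [h0]; split <;> norm_num
    | succ n ih =>
      intro x
      rw [hrec]
      have h1 := ih x; have h2 := ih (x - 1)
      have h3 := hnn n x; have h4 := hnn n (x - 1)
      nlinarith
  have hmono : ∀ n x, F n x ≤ F (n + 1) x := by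
    intro n
    induction n with
    | zero =>
      intro x
      rw [hrec]
      simp only [h0]
      by_cases hx : x ≤ 0
      · have hx1 : x - 1 ≤ 0 := by omega
        rw [if_pos hx, if_pos hx1]; norm_num
      · rw [if_neg hx]; positivity
    | succ n ih =>
      intro x
      rw [hrec, hrec]
      have h1 := ih x; have h2 := ih (x - 1)
      have h3 := hnn n x; have h4 := hnn n (x - 1)
      nlinarith
  have hmono' : ∀ x, Monotone (fun n => F n x) := fun x =>
    monotone_nat_of_le_succ (fun n => hmono n x)
  have hbdd : ∀ x, BddAbove (Set.range (fun n => F n x)) := by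
    intro x
    exact ⟨1, by rintro y ⟨n, rfl⟩; exact hle1 n x⟩
  set L : ℤ → ℝ := fun x => ⨆ n, F n x with hLdef
  have htend : ∀ x, Filter.Tendsto (fun n => F n x) Filter.atTop (nhds (L x)) :=
    fun x => tendsto_atTop_ciSup (hmono' x) (hbdd x)
  have hLle : ∀ x, L x ≤ 1 := fun x => ciSup_le (fun n => hle1 n x)
  have hLge : ∀ x, 0 ≤ L x := fun x =>
    le_trans (hnn 0 x) (le_ciSup (hbdd x) 0)
  have heq : ∀ x, L x = ((L x + L (x - 1)) / 2) ^ 2 := by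
    intro x
    have h1 : Filter.Tendsto (fun n => F (n + 1) x) Filter.atTop (nhds (L x)) :=
      (htend x).comp (Filter.tendsto_add_atTop_nat 1)
    have h2 : Filter.Tendsto (fun n => ((F n x + F n (x - 1)) / 2) ^ 2) Filter.atTop
        (nhds (((L x + L (x - 1)) / 2) ^ 2)) :=
      (((htend x).add (htend (x - 1))).div_const 2).pow 2
    have h3 : (fun n => F (n + 1) x) = fun n => ((F n x + F n (x - 1)) / 2) ^ 2 := by
      funext n; exact hrec n x
    rw [h3] at h1
    exact tendsto_nhds_unique h1 h2
  have hbase : ∀ n, ∀ x : ℤ, x ≤ 0 → F n x = 1 := by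
    intro n
    induction n with
    | zero => intro x hx; rw [h0, if_pos hx]
    | succ n ih =>
      intro x hx
      rw [hrec, ih x hx, ih (x - 1) (by omega)]
      norm_num
  have hLbase : ∀ x : ℤ, x ≤ 0 → L x = 1 := by
    intro x hx
    have : (fun n => F n x) = fun _ => (1 : ℝ) := funext fun n => hbase n x hx
    rw [hLdef]
    simp only [this, ciSup_const]
  have hLone : ∀ k : ℕ, ∀ x : ℤ, x ≤ k → L x = 1 := by
    intro k
    induction k with
    | zero => intro x hx; exact hLbase x (by exact_mod_cast hx)
    | succ k ih =>
      intro x hx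
      have hprev : L (x - 1) = 1 := ih (x - 1) (by omega)
      have he := heq x
      rw [hprev] at he
      have hsq : (L x - 1) ^ 2 = 0 := by nlinarith [hLle x, hLge x]
      have := pow_eq_zero_iff (n := 2) (by norm_num) |>.mp hsq
      linarith
  intro x
  have : L x = 1 := hLone x.toNat x (Int.self_le_toNat x)
  rw [← this]
  exact htend x
end

section
/- With F_n as in the symmetric hierarchical scheme and g(y) = 2 - y - 2√(1-y), G(y) = 2√y - y, the inequalities F_n(x) ≤ g(F_n(x-1)) and G(F_n(x)) ≤ F_n(x-1) hold for all n and x. -/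
noncomputable def g (y : ℝ) : ℝ := 2 - y - 2 * Real.sqrt (1 - y)
noncomputable def G (y : ℝ) : ℝ := 2 * Real.sqrt y - y

theorem FngG_inequalities (F : ℕ → ℤ → ℝ)
    (h0 : ∀ x : ℤ, F 0 x = if x ≤ 0 then 1 else 0)
    (hrec : ∀ (n : ℕ) (x : ℤ), F (n + 1) x = ((F n x + F n (x - 1)) / 2) ^ 2) :
    ∀ (n : ℕ) (x : ℤ), F n x ≤ g (F n (x - 1)) ∧ G (F n x) ≤ F n (x - 1) := by
  have hbd : ∀ n x, 0 ≤ F n x ∧ F n x ≤ 1 := by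
    intro n
    induction n with
    | zero => intro x; rw [h0]; split <;> norm_num
    | succ n ih =>
      intro x
      have h1 := ih x; have h2 := ih (x - 1)
      rw [hrec]
      constructor
      · positivity
      · nlinarith [h1.1, h1.2, h2.1, h2.2]
  have key : ∀ n x, Real.sqrt (F n x) + Real.sqrt (1 - F n (x - 1)) ≤ 1 := by
    intro n
    induction n with
    | zero =>
      intro x
      rw [h0, h0]
      by_cases hx : x ≤ 0
      · have hx1 : x - 1 ≤ 0 := by omega
        simp [hx, hx1]
      · simp only [if_neg hx]
        by_cases hx1 : x - 1 ≤ 0 <;> simp [hx1]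
    | succ n ih =>
      intro x
      obtain ⟨ha0, ha1⟩ := hbd n x
      obtain ⟨hb0, hb1⟩ := hbd n (x - 1)
      obtain ⟨hc0, hc1⟩ := hbd n (x - 1 - 1)
      have h1 := ih x
      have h2 := ih (x - 1)
      set a := F n x
      set b := F n (x - 1)
      set c := F n (x - 1 - 1)
      have hsa0 : (0:ℝ) ≤ Real.sqrt a := Real.sqrt_nonneg a
      have hsb0 : (0:ℝ) ≤ Real.sqrt b := Real.sqrt_nonneg b
      have hpb0 : (0:ℝ) ≤ Real.sqrt (1 - b) := Real.sqrt_nonneg _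
      have hpc0 : (0:ℝ) ≤ Real.sqrt (1 - c) := Real.sqrt_nonneg _
      have hsa2 : Real.sqrt a ^ 2 = a := Real.sq_sqrt ha0
      have hsb2 : Real.sqrt b ^ 2 = b := Real.sq_sqrt hb0
      have hpb2 : Real.sqrt (1 - b) ^ 2 = 1 - b := Real.sq_sqrt (by linarith)
      have hpc2 : Real.sqrt (1 - c) ^ 2 = 1 - c := Real.sq_sqrt (by linarith)
      rw [hrec, hrec]
      have e1 : Real.sqrt (((a + b) / 2) ^ 2) = (a + b) / 2 :=
        Real.sqrt_sq (by linarith)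
      -- c ≥ 2√b - b
      have hcge : 2 * Real.sqrt b - b ≤ c := by
        nlinarith [h2, hpc0, hsb0]
      have hbge : b ≤ ((b + c) / 2) ^ 2 := by
        nlinarith [sq_nonneg ((b + c) / 2 - Real.sqrt b), hsb2, hsb0]
      have e2 : Real.sqrt (1 - ((b + c) / 2) ^ 2) ≤ Real.sqrt (1 - b) :=
        Real.sqrt_le_sqrt (by linarith)
      have e3 : (a + b) / 2 + Real.sqrt (1 - b) ≤ 1 := by
        nlinarith [h1, hsa0, hpb0, hsa2, hpb2]
      linarith [e1.le, e2, e3, e1.ge]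
  intro n x
  obtain ⟨ha0, ha1⟩ := hbd n x
  obtain ⟨hb0, hb1⟩ := hbd n (x - 1)
  have hk := key n x
  set a := F n x
  set b := F n (x - 1)
  have hsa0 : (0:ℝ) ≤ Real.sqrt a := Real.sqrt_nonneg a
  have hpb0 : (0:ℝ) ≤ Real.sqrt (1 - b) := Real.sqrt_nonneg _
  have hsa2 : Real.sqrt a ^ 2 = a := Real.sq_sqrt ha0
  have hpb2 : Real.sqrt (1 - b) ^ 2 = 1 - b := Real.sq_sqrt (by linarith)
  constructor
  · show a ≤ 2 - b - 2 * Real.sqrt (1 - b)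
    nlinarith [hk, hsa0, hpb0, hsa2, hpb2]
  · show 2 * Real.sqrt a - a ≤ b
    nlinarith [hk, hsa0, hpb0, hsa2, hpb2]
end

section
/- For 0 < a < 1, define 𝔉^a : ℤ → [0,1] by 𝔉^a(n) = g^n(a) for n > 0, 𝔉^a(0) = a, and 𝔉^a(n) = G^{|n|}(a) for n < 0, where g(y) = 2-y-2√(1-y), G(y) = 2√y - y. Then 𝔉^a satisfies the invariance equation 4𝔉^a(x) = (𝔉^a(x) + 𝔉^a(x-1))² for all x ∈ ℤ. -/
/-- The invariant family 𝔉^a. -/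
noncomputable def Fhelix (a : ℝ) (n : ℤ) : ℝ :=
  if 0 < n then g^[n.toNat] a else if n = 0 then a else G^[(-n).toNat] a

lemma g_mem {y : ℝ} (hy : y ∈ Set.Icc (0:ℝ) 1) : g y ∈ Set.Icc (0:ℝ) 1 := by
  obtain ⟨h0, h1⟩ := hy
  have hs : Real.sqrt (1 - y) ^ 2 = 1 - y := Real.sq_sqrt (by linarith)
  have hsn : 0 ≤ Real.sqrt (1 - y) := Real.sqrt_nonneg _
  constructor
  · unfold g; nlinarith [sq_nonneg (1 - Real.sqrt (1 - y))]
  · unfold g; nlinarith [sq_nonneg (1 - Real.sqrt (1 - y)), sq_nonneg (Real.sqrt (1 - y))]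

lemma G_mem {y : ℝ} (hy : y ∈ Set.Icc (0:ℝ) 1) : G y ∈ Set.Icc (0:ℝ) 1 := by
  obtain ⟨h0, h1⟩ := hy
  have hs : Real.sqrt y ^ 2 = y := Real.sq_sqrt h0
  have hsn : 0 ≤ Real.sqrt y := Real.sqrt_nonneg _
  constructor
  · unfold G; nlinarith [sq_nonneg (1 - Real.sqrt y)]
  · unfold G; nlinarith [sq_nonneg (1 - Real.sqrt y)]

lemma g_iter_mem {y : ℝ} (hy : y ∈ Set.Icc (0:ℝ) 1) (n : ℕ) :
    g^[n] y ∈ Set.Icc (0:ℝ) 1 := by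
  induction n with
  | zero => simpa using hy
  | succ k ih => rw [Function.iterate_succ_apply']; exact g_mem ih

lemma G_iter_mem {y : ℝ} (hy : y ∈ Set.Icc (0:ℝ) 1) (n : ℕ) :
    G^[n] y ∈ Set.Icc (0:ℝ) 1 := by
  induction n with
  | zero => simpa using hy
  | succ k ih => rw [Function.iterate_succ_apply']; exact G_mem ih

lemma key_g {y : ℝ} (hy : y ≤ 1) : 4 * g y = (g y + y) ^ 2 := by
  have hs : Real.sqrt (1 - y) ^ 2 = 1 - y := Real.sq_sqrt (by linarith)
  unfold g; nlinarith

lemma key_G {y : ℝ} (hy : 0 ≤ y) : 4 * y = (y + G y) ^ 2 := by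
  have hs : Real.sqrt y ^ 2 = y := Real.sq_sqrt hy
  unfold G; nlinarith

theorem Fhelix_invariant :
    ∀ a ∈ Set.Ioo (0:ℝ) 1, ∀ x : ℤ,
      4 * Fhelix a x = (Fhelix a x + Fhelix a (x - 1)) ^ 2 := by
  intro a ha x
  have ha' : a ∈ Set.Icc (0:ℝ) 1 := ⟨le_of_lt ha.1, le_of_lt ha.2⟩
  rcases le_or_gt x 0 with hx | hx
  · -- x ≤ 0 : both values are G-iterates
    have h1 : Fhelix a x = G^[(-x).toNat] a := by
      unfold Fhelix
      rcases eq_or_lt_of_le hx with heq | hlt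
      · subst heq; simp
      · rw [if_neg (by omega), if_neg (by omega)]
    have h2 : Fhelix a (x - 1) = G (G^[(-x).toNat] a) := by
      unfold Fhelix
      rw [if_neg (by omega), if_neg (by omega)]
      have : (-(x - 1)).toNat = (-x).toNat + 1 := by omega
      rw [this, Function.iterate_succ_apply']
    rw [h1, h2]
    exact key_G (G_iter_mem ha' _).1
  · -- x ≥ 1 : both values are g-iterates
    have h1 : Fhelix a x = g (g^[(x - 1).toNat] a) := by
      unfold Fhelix
      rw [if_pos hx]
      have : x.toNat = (x - 1).toNat + 1 := by omega
      rw [this, Function.iterate_succ_apply']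
    have h2 : Fhelix a (x - 1) = g^[(x - 1).toNat] a := by
      unfold Fhelix
      rcases eq_or_lt_of_le (by omega : (1:ℤ) ≤ x) with heq | hlt
      · simp [← heq]
      · rw [if_pos (by omega)]
    rw [h1, h2]
    exact key_g (g_iter_mem ha' _).2
end

section
/- Let ξ be an integer-valued random variable with E|ξ| < ∞, E[exp(γξ)] < ∞ for all γ > 0, whose essential supremum ω = sup{m : P(ξ=m)>0} is finite and satisfies P(ξ = ω) < 1/2. Then lim_{γ→+∞} [L(γ) - γL'(γ)] = ln P(ξ = ω) < ln(1/2), where L(γ) = ln E[exp(γξ)]; consequently the equation L(γ) - γL'(γ) = ln(1/2) has a solution γ* ∈ (0,∞). -/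
open MeasureTheory Filter

/-!
Centre at the top atom: `X = ξ - w ≤ 0` a.e., and `G(γ) = L(γ) - γ L'(γ)` is unchanged by
translating the variable. For `γ > 0`, `G(γ) = log E[e^{γX}] - E[γX e^{γX}] / E[e^{γX}]`; since
`|x eˣ| ≤ 1` for `x ≤ 0`, dominated convergence gives `E[e^{γX}] → P(X = 0)` and `E[γX e^{γX}] → 0`
as `γ → ∞`, so `G → log P(ξ = w)`. As `γ → 0⁺`, `G(γ) ≥ log E[e^{γX}] → 0` because the correction
term is nonnegative. The cumulant generating function is analytic on `(0, ∞)`, so `G` is continuous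
there and the intermediate value theorem produces the root.
-/

open Real Set Topology

lemma Real.abs_mul_exp_le_one_of_nonpos {x : ℝ} (hx : x ≤ 0) : |x * exp x| ≤ 1 := by
  have h := mul_exp_neg_le_exp_neg_one (-x)
  rw [neg_neg] at h
  rw [abs_of_nonpos (mul_nonpos_of_nonpos_of_nonneg hx (exp_pos x).le)]
  calc -(x * exp x) = -x * exp x := by ring
    _ ≤ exp (-1) := h
    _ ≤ 1 := exp_le_one_iff.2 (by norm_num)

lemma Real.tendsto_mul_exp_atBot : Tendsto (fun x => x * exp x) atBot (𝓝 0) := by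
  simpa [Function.comp_def] using
    (tendsto_pow_mul_exp_neg_atTop_nhds_zero 1).neg.comp tendsto_neg_atBot_atTop

lemma MeasureTheory.ae_of_forall_measure_eq_pos {Ω α : Type*} [MeasurableSpace Ω]
    {μ : Measure Ω} [Countable α] [MeasurableSpace α] [MeasurableSingletonClass α]
    {ξ : Ω → α} (hξ : Measurable ξ) {P : α → Prop}
    (h : ∀ a, 0 < μ {ω | ξ ω = a} → P a) : ∀ᵐ ω ∂μ, P (ξ ω) := by
  refine ae_of_ae_map hξ.aemeasurable (ae_iff_of_countable.2 fun a ha => h a ?_)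
  rw [Measure.map_apply hξ (measurableSet_singleton a)] at ha
  exact pos_iff_ne_zero.2 ha

namespace ProbabilityTheory

variable {Ω : Type*} {m : MeasurableSpace Ω} {μ : Measure Ω} {X : Ω → ℝ} {t : ℝ}

noncomputable def cumulantGap (X : Ω → ℝ) (μ : Measure Ω) (t : ℝ) : ℝ :=
  cgf X μ t - t * deriv (cgf X μ) t

lemma cumulantGap_eq_of_mem_interior (h : t ∈ interior (integrableExpSet X μ)) :
    cumulantGap X μ t = cgf X μ t - μ[fun ω => t * X ω * exp (t * X ω)] / mgf X μ t := by
  simp_rw [cumulantGap, deriv_cgf h, mul_assoc, integral_const_mul, mul_div_assoc]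

lemma cumulantGap_add_const (h : t ∈ interior (integrableExpSet X μ)) (c : ℝ) :
    cumulantGap (fun ω => X ω + c) μ t = cumulantGap X μ t := by
  rcases eq_zero_or_neZero μ with rfl | hμ
  · simp [cumulantGap]
  have hcgf : cgf (fun ω => X ω + c) μ =ᶠ[𝓝 t] fun s => cgf X μ s + s * c := by
    filter_upwards [isOpen_interior.mem_nhds h] with s hs
    have hmgf := mgf_pos' hμ.out (interior_subset (s := integrableExpSet X μ) hs)
    rw [cgf, mgf_add_const, log_mul hmgf.ne' (exp_pos _).ne', log_exp, cgf]
  have hderiv : HasDerivAt (fun s => cgf X μ s + s * c) (deriv (cgf X μ) t + c) t :=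
    (analyticAt_cgf h).differentiableAt.hasDerivAt.add (hasDerivAt_mul_const c)
  rw [cumulantGap, hcgf.eq_of_nhds, hcgf.deriv_eq, hderiv.deriv, cumulantGap]
  ring

lemma continuousOn_cumulantGap :
    ContinuousOn (cumulantGap X μ) (interior (integrableExpSet X μ)) :=
  analyticOnNhd_cgf.continuousOn.sub (continuousOn_id.mul analyticOnNhd_cgf.deriv.continuousOn)

lemma ae_norm_exp_mul_le_one (hX0 : ∀ᵐ ω ∂μ, X ω ≤ 0) (ht : 0 ≤ t) :
    ∀ᵐ ω ∂μ, ‖exp (t * X ω)‖ ≤ 1 := by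
  filter_upwards [hX0] with ω hω
  rw [norm_of_nonneg (exp_pos _).le]
  exact exp_le_one_iff.2 (mul_nonpos_of_nonneg_of_nonpos ht hω)

lemma ae_norm_mul_mul_exp_le_one (hX0 : ∀ᵐ ω ∂μ, X ω ≤ 0) (ht : 0 ≤ t) :
    ∀ᵐ ω ∂μ, ‖t * X ω * exp (t * X ω)‖ ≤ 1 := by
  filter_upwards [hX0] with ω hω
  exact abs_mul_exp_le_one_of_nonpos (mul_nonpos_of_nonneg_of_nonpos ht hω)

lemma integrable_exp_mul_of_ae_nonpos [IsFiniteMeasure μ] (hX : Measurable X)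
    (hX0 : ∀ᵐ ω ∂μ, X ω ≤ 0)
    (ht : 0 ≤ t) : Integrable (fun ω => exp (t * X ω)) μ :=
  (integrable_const 1).mono' (by fun_prop) (ae_norm_exp_mul_le_one hX0 ht)

lemma Ioi_subset_interior_integrableExpSet [IsFiniteMeasure μ] (hX : Measurable X)
    (hX0 : ∀ᵐ ω ∂μ, X ω ≤ 0) :
    Ioi 0 ⊆ interior (integrableExpSet X μ) :=
  interior_maximal (fun _ ht => integrable_exp_mul_of_ae_nonpos hX hX0 (le_of_lt ht)) isOpen_Ioi

lemma tendsto_mgf_atTop_of_ae_nonpos [IsFiniteMeasure μ] (hX : Measurable X)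
    (hX0 : ∀ᵐ ω ∂μ, X ω ≤ 0) :
    Tendsto (mgf X μ) atTop (𝓝 (μ.real {ω | X ω = 0})) := by
  have hzero : MeasurableSet {ω | X ω = 0} := hX (measurableSet_singleton 0)
  rw [← integral_indicator_one hzero]
  refine tendsto_integral_filter_of_dominated_convergence (fun _ => 1)
    (Eventually.of_forall fun t => by fun_prop) ?_ (integrable_const 1) ?_
  · filter_upwards [eventually_ge_atTop 0] with t ht using ae_norm_exp_mul_le_one hX0 ht
  · filter_upwards [hX0] with ω hω
    rcases hω.lt_or_eq with hlt | h0
    · rw [indicator_of_notMem (show ω ∉ {ω | X ω = 0} from hlt.ne)]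
      exact tendsto_exp_atBot.comp (tendsto_id.atTop_mul_const_of_neg hlt)
    · simp [h0]

lemma tendsto_integral_mul_mul_exp_atTop_of_ae_nonpos [IsFiniteMeasure μ] (hX : Measurable X)
    (hX0 : ∀ᵐ ω ∂μ, X ω ≤ 0) :
    Tendsto (fun t => μ[fun ω => t * X ω * exp (t * X ω)]) atTop (𝓝 0) := by
  rw [← integral_zero Ω ℝ]
  refine tendsto_integral_filter_of_dominated_convergence (fun _ => 1)
    (Eventually.of_forall fun t => by fun_prop) ?_ (integrable_const 1) ?_
  · filter_upwards [eventually_ge_atTop 0] with t ht using ae_norm_mul_mul_exp_le_one hX0 ht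
  · filter_upwards [hX0] with ω hω
    rcases hω.lt_or_eq with hlt | h0
    · exact tendsto_mul_exp_atBot.comp (tendsto_id.atTop_mul_const_of_neg hlt)
    · simp [h0]

lemma tendsto_mgf_nhdsGT_zero_of_ae_nonpos [IsProbabilityMeasure μ] (hX : Measurable X)
    (hX0 : ∀ᵐ ω ∂μ, X ω ≤ 0) :
    Tendsto (mgf X μ) (𝓝[>] 0) (𝓝 1) := by
  rw [← mgf_zero (X := X) (μ := μ)]
  refine tendsto_integral_filter_of_dominated_convergence (fun _ => 1)
    (Eventually.of_forall fun t => by fun_prop) ?_ (integrable_const 1) ?_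
  · filter_upwards [self_mem_nhdsWithin] with t ht using ae_norm_exp_mul_le_one hX0 (le_of_lt ht)
  · refine Eventually.of_forall fun ω => Tendsto.mono_left ?_ nhdsWithin_le_nhds
    exact (continuous_exp.comp (continuous_id.mul continuous_const)).tendsto 0

lemma cgf_le_cumulantGap_of_ae_nonpos [IsProbabilityMeasure μ] (hX : Measurable X)
    (hX0 : ∀ᵐ ω ∂μ, X ω ≤ 0)
    (ht : 0 < t) : cgf X μ t ≤ cumulantGap X μ t := by
  rw [cumulantGap_eq_of_mem_interior (Ioi_subset_interior_integrableExpSet hX hX0 ht)]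
  have hnum : μ[fun ω => t * X ω * exp (t * X ω)] ≤ 0 := by
    refine integral_nonpos_of_ae ?_
    filter_upwards [hX0] with ω hω
    exact mul_nonpos_of_nonpos_of_nonneg (mul_nonpos_of_nonneg_of_nonpos ht.le hω) (exp_pos _).le
  have hden : 0 < mgf X μ t := mgf_pos (integrable_exp_mul_of_ae_nonpos hX hX0 ht.le)
  linarith [div_nonpos_of_nonpos_of_nonneg hnum hden.le]

lemma tendsto_cumulantGap_atTop_of_ae_nonpos [IsFiniteMeasure μ] (hX : Measurable X)
    (hX0 : ∀ᵐ ω ∂μ, X ω ≤ 0)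
    (hp : 0 < μ.real {ω | X ω = 0}) :
    Tendsto (cumulantGap X μ) atTop (𝓝 (log (μ.real {ω | X ω = 0}))) := by
  have hmgf := tendsto_mgf_atTop_of_ae_nonpos hX hX0
  have hlim := ((continuousAt_log hp.ne').tendsto.comp hmgf).sub
    ((tendsto_integral_mul_mul_exp_atTop_of_ae_nonpos hX hX0).div hmgf hp.ne')
  rw [zero_div, sub_zero] at hlim
  refine hlim.congr' ?_
  filter_upwards [eventually_gt_atTop 0] with t ht
  rw [cumulantGap_eq_of_mem_interior (Ioi_subset_interior_integrableExpSet hX hX0 ht)]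
  rfl

lemma exists_cumulantGap_eq_of_ae_nonpos [IsProbabilityMeasure μ] (hX : Measurable X)
    (hX0 : ∀ᵐ ω ∂μ, X ω ≤ 0)
    {c : ℝ} (hpc : log (μ.real {ω | X ω = 0}) < c) (hc : c < 0) :
    ∃ t, 0 < t ∧ cumulantGap X μ t = c := by
  have hp : 0 < μ.real {ω | X ω = 0} := by
    refine measureReal_nonneg.lt_of_ne fun h => ?_
    rw [← h, log_zero] at hpc
    linarith
  have hsmall : ∀ᶠ t in 𝓝[>] 0, c ≤ cumulantGap X μ t := by
    filter_upwards [(tendsto_mgf_nhdsGT_zero_of_ae_nonpos hX hX0).eventually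
      (eventually_gt_nhds (exp_lt_one_iff.2 hc)), self_mem_nhdsWithin] with t hmgf ht
    calc c ≤ cgf X μ t := ((lt_log_iff_exp_lt ((exp_pos c).trans hmgf)).2 hmgf).le
      _ ≤ cumulantGap X μ t := cgf_le_cumulantGap_of_ae_nonpos hX hX0 ht
  have hlarge : ∀ᶠ t in atTop, cumulantGap X μ t ≤ c :=
    ((tendsto_cumulantGap_atTop_of_ae_nonpos hX hX0 hp).eventually
      (eventually_lt_nhds hpc)).mono fun _ h => h.le
  exact isPreconnected_Ioi.intermediate_value₂_eventually₂
    (le_principal_iff.2 (Ioi_mem_atTop 0)) (le_principal_iff.2 self_mem_nhdsWithin)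
    (continuousOn_cumulantGap.mono (Ioi_subset_interior_integrableExpSet hX hX0))
    continuousOn_const hlarge hsmall

end ProbabilityTheory

open ProbabilityTheory in
theorem cumulant_equation_solvable_general {Ω : Type*} [MeasurableSpace Ω]
    (μ : Measure Ω) [IsProbabilityMeasure μ] (ξ : Ω → ℤ) (hmeas : Measurable ξ)
    (w : ℤ) (hw : 0 < μ {ω | ξ ω = w})
    (hsup : ∀ m : ℤ, 0 < μ {ω | ξ ω = m} → m ≤ w)
    (hhalf : (μ {ω | ξ ω = w}).toReal < 1 / 2)
    (L : ℝ → ℝ) (hL : ∀ γ : ℝ, L γ = Real.log (∫ ω, Real.exp (γ * (ξ ω : ℝ)) ∂μ)) :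
    Tendsto (fun γ => L γ - γ * deriv L γ) atTop
      (nhds (Real.log ((μ {ω | ξ ω = w}).toReal))) ∧
    Real.log ((μ {ω | ξ ω = w}).toReal) < Real.log (1 / 2) ∧
    ∃ γs : ℝ, 0 < γs ∧ L γs - γs * deriv L γs = Real.log (1 / 2) := by
  obtain rfl : L = cgf (fun ω => (ξ ω : ℝ)) μ := funext hL
  set X : Ω → ℝ := fun ω => (ξ ω : ℝ) - w
  have hX : Measurable X := (measurable_from_top.comp hmeas).sub_const _
  have hX0 : ∀ᵐ ω ∂μ, X ω ≤ 0 :=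
    (ae_of_forall_measure_eq_pos hmeas hsup).mono fun ω h => sub_nonpos.2 (Int.cast_le.2 h)
  have hp : μ.real {ω | X ω = 0} = (μ {ω | ξ ω = w}).toReal := by
    simp [X, measureReal_def, sub_eq_zero]
  have hgap : ∀ t, 0 < t → cumulantGap (fun ω => (ξ ω : ℝ)) μ t = cumulantGap X μ t := by
    intro t ht
    rw [← cumulantGap_add_const (Ioi_subset_interior_integrableExpSet hX hX0 ht) w]
    simp [X]
  have hpos : 0 < (μ {ω | ξ ω = w}).toReal := ENNReal.toReal_pos hw.ne' (measure_ne_top _ _)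
  have hlog : log (μ {ω | ξ ω = w}).toReal < log (1 / 2) := log_lt_log hpos hhalf
  rw [← hp] at hpos hlog ⊢
  refine ⟨?_, hlog, ?_⟩
  · refine (tendsto_cumulantGap_atTop_of_ae_nonpos hX hX0 hpos).congr' ?_
    filter_upwards [eventually_gt_atTop 0] with t ht using (hgap t ht).symm
  · obtain ⟨t, ht, hroot⟩ :=
      exists_cumulantGap_eq_of_ae_nonpos hX hX0 hlog (log_neg (by norm_num) (by norm_num))
    exact ⟨t, ht, (hgap t ht).trans hroot⟩

theorem cumulant_equation_solvable {Ω : Type*} [MeasurableSpace Ω]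
    (μ : Measure Ω) [IsProbabilityMeasure μ] (ξ : Ω → ℤ) (hmeas : Measurable ξ)
    (hint : Integrable (fun ω => (ξ ω : ℝ)) μ)
    (hexp : ∀ γ : ℝ, 0 < γ → Integrable (fun ω => Real.exp (γ * (ξ ω : ℝ))) μ)
    (w : ℤ) (hw : 0 < μ {ω | ξ ω = w})
    (hsup : ∀ m : ℤ, 0 < μ {ω | ξ ω = m} → m ≤ w)
    (hhalf : (μ {ω | ξ ω = w}).toReal < 1 / 2)
    (L : ℝ → ℝ) (hL : ∀ γ : ℝ, L γ = Real.log (∫ ω, Real.exp (γ * (ξ ω : ℝ)) ∂μ)) :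
    Tendsto (fun γ => L γ - γ * deriv L γ) atTop
      (nhds (Real.log ((μ {ω | ξ ω = w}).toReal))) ∧
    Real.log ((μ {ω | ξ ω = w}).toReal) < Real.log (1 / 2) ∧
    ∃ γs : ℝ, 0 < γs ∧ L γs - γs * deriv L γs = Real.log (1 / 2) :=
  cumulant_equation_solvable_general μ ξ hmeas w hw hsup hhalf L hL
end
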